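/- The Jing operators H_m for the Hall-Littlewood symmetric functions satisfy H_{m−1} H_m = q · H_m H_{m−1}. -/

import Mathlib

set_option maxHeartbeats 1000000
set_option synthInstance.maxHeartbeats 400000


open MvPolynomial

noncomputable section

/-- The field `ℚ(q)` of rational functions in the parameter `q`. -/
abbrev Fq : Type := RatFunc ℚ

/-- The parameter `q`. -/
def qp : Fq := RatFunc.X

/-- The ring `Λ ⊗ ℚ(q)` of symmetric functions with parameter `q`, presented as
`ℚ(q)[p₁, p₂, p₃, …]`, where the variable `k` stands for the power sum `p_{k+1}`. -/
abbrev SymF : Type := MvPolynomial ℕ Fq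

/-- The power sum `p_n` (for `n ≥ 1`). -/
def psumF (n : ℕ) : SymF := X (n - 1)

/-- The complete homogeneous symmetric functions `h_n`, defined via Newton's identity
`n·h_n = ∑_{i=1}^n p_i h_{n-i}`, so that `Ω[zX] = ∑_{n ≥ 0} h_n[X] zⁿ`. -/
def hfunF : ℕ → SymF
  | 0 => 1
  | (n + 1) =>
      C (((n : Fq) + 1)⁻¹) *
        ∑ i ∈ Finset.range (n + 1), psumF (i + 1) * hfunF (n - i)
  decreasing_by exact Nat.lt_succ_of_le (Nat.sub_le n i)

/-- Laurent series in `z` with coefficients in `Λ ⊗ ℚ(q)`. -/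
abbrev LSF : Type := LaurentSeries SymF

/-- The series `Ω[zX] = ∑_{n ≥ 0} h_n[X] zⁿ`. -/
def OmegaF : LSF := HahnSeries.ofPowerSeries ℤ SymF (PowerSeries.mk hfunF)

/-- The plethystic substitution `P[X] ↦ P[X − (1−q)/z]`, determined on power sums by
`p_k ↦ p_k − (1 − q^k) z^{−k}`. -/
def substHF : SymF →+* LSF :=
  eval₂Hom ((HahnSeries.C : SymF →+* LSF).comp (MvPolynomial.C : Fq →+* SymF))
    (fun k => HahnSeries.C (X k : SymF) -
      HahnSeries.single (-(k + 1 : ℤ)) (C (1 - qp ^ (k + 1)) : SymF))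

/-- Jing's Hall-Littlewood vertex operator `H_m`: the coefficient of `z^m` in
`H(z)P[X] = P[X − (1−q)/z]·Ω[zX]`. -/
def Hop (m : ℤ) (P : SymF) : SymF := (substHF P * OmegaF).coeff m

/-! ### Auxiliary material: generic Hahn series lemmas -/

section Generic

open HahnSeries Finset

variable {R S : Type*} [CommRing R] [CommRing S]

/-- Coefficient of a product of Hahn series over `ℤ`, as a `finsum`. -/
lemma hmul_coeff_finsum (x y : HahnSeries ℤ R) (a : ℤ) :
    (x * y).coeff a = ∑ᶠ i : ℤ, x.coeff i * y.coeff (a - i) := by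
  classical
  rw [HahnSeries.coeff_mul]
  rw [finsum_eq_sum_of_support_subset (f := fun i : ℤ => x.coeff i * y.coeff (a - i))
    (s := (antidiagonal x.isPWO_support y.isPWO_support a).image Prod.fst) ?_]
  · rw [Finset.sum_image ?inj]
    · apply Finset.sum_congr rfl
      rintro ⟨i, j⟩ hij
      rw [Finset.mem_antidiagonal] at hij
      have : j = a - i := by omega
      rw [this]
    case inj =>
      rintro ⟨i, j⟩ hij ⟨i', j'⟩ hij' h
      rw [Finset.mem_coe, Finset.mem_antidiagonal] at hij hij'
      simp only at h
      ext <;> omega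
  · intro i hi
    simp only [Function.mem_support] at hi
    have hx : x.coeff i ≠ 0 := fun h => hi (by rw [h, zero_mul])
    have hy : y.coeff (a - i) ≠ 0 := fun h => hi (by rw [h, mul_zero])
    simp only [Finset.coe_image, Set.mem_image, Finset.mem_coe]
    exact ⟨(i, a - i), by rw [Finset.mem_antidiagonal]; exact ⟨hx, hy, by omega⟩, rfl⟩

lemma supp_pair_finite (x y : HahnSeries ℤ R) (a : ℤ) :
    {i : ℤ | x.coeff i ≠ 0 ∧ y.coeff (a - i) ≠ 0}.Finite := by
  apply Set.Finite.subset (Finset.finite_toSet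
    ((antidiagonal x.isPWO_support y.isPWO_support a).image Prod.fst))
  rintro i ⟨hx, hy⟩
  simp only [Finset.coe_image, Set.mem_image, Finset.mem_coe]
  exact ⟨(i, a - i), by rw [Finset.mem_antidiagonal]; exact ⟨hx, hy, by omega⟩, rfl⟩

lemma hmul_support_finite (x y : HahnSeries ℤ R) (a : ℤ) :
    (Function.support fun i : ℤ => x.coeff i * y.coeff (a - i)).Finite := by
  apply Set.Finite.subset (supp_pair_finite x y a)
  intro i hi
  simp only [Function.mem_support] at hi
  exact ⟨fun h => hi (by rw [h, zero_mul]), fun h => hi (by rw [h, mul_zero])⟩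

/-- Ring homomorphism induced on Hahn series by a ring homomorphism on coefficients. -/
def hmap (f : R →+* S) : HahnSeries ℤ R →+* HahnSeries ℤ S where
  toFun x := x.map f
  map_one' := HahnSeries.map_one f.toMonoidWithZeroHom
  map_mul' _ _ := HahnSeries.map_mul f.toNonUnitalRingHom
  map_zero' := HahnSeries.map_zero f.toZeroHom
  map_add' _ _ := HahnSeries.map_add f.toAddMonoidHom

@[simp] lemma hmap_coeff (f : R →+* S) (x : HahnSeries ℤ R) (a : ℤ) :
    (hmap f x).coeff a = f (x.coeff a) := rfl

lemma hmap_single (f : R →+* S) (a : ℤ) (r : R) :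
    hmap f (HahnSeries.single a r) = HahnSeries.single a (f r) :=
  HahnSeries.map_single f.toZeroHom

lemma hmap_C (f : R →+* S) (r : R) :
    hmap f (HahnSeries.C r) = HahnSeries.C (f r) := by
  rw [HahnSeries.C_apply, HahnSeries.C_apply, hmap_single]

/-- Double coefficient of a product in nested Hahn series, as a finsum over pairs. -/
lemma dc_mul (x y : HahnSeries ℤ (HahnSeries ℤ R)) (a b : ℤ) :
    ((x * y).coeff a).coeff b =
      ∑ᶠ p : ℤ × ℤ, (x.coeff p.1).coeff p.2 * ((y.coeff (a - p.1)).coeff (b - p.2)) := by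
  have h1 : ((x * y).coeff a).coeff b
      = ∑ᶠ i : ℤ, ((x.coeff i * y.coeff (a - i)).coeff b) := by
    rw [hmul_coeff_finsum]
    exact (coeff.addMonoidHom b).map_finsum (hmul_support_finite x y a)
  have h2 : ∀ i : ℤ, (x.coeff i * y.coeff (a - i)).coeff b
      = ∑ᶠ k : ℤ, (x.coeff i).coeff k * (y.coeff (a - i)).coeff (b - k) := fun i =>
    hmul_coeff_finsum _ _ b
  rw [h1]
  simp_rw [h2]
  rw [finsum_curry _ ?_]
  · apply Set.Finite.subset
      (Set.Finite.prod (supp_pair_finite x y a)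
        (Set.Finite.biUnion (supp_pair_finite x y a) (fun i _ =>
          hmul_support_finite (x.coeff i) (y.coeff (a - i)) b)))
    rintro ⟨i, k⟩ hik
    simp only [Function.mem_support] at hik
    have hx : (x.coeff i).coeff k ≠ 0 := fun h => hik (by rw [h, zero_mul])
    have hy : (y.coeff (a - i)).coeff (b - k) ≠ 0 := fun h => hik (by rw [h, mul_zero])
    have hi : x.coeff i ≠ 0 ∧ y.coeff (a - i) ≠ 0 :=
      ⟨fun h => hx (by rw [h]; rfl), fun h => hy (by rw [h]; rfl)⟩
    refine ⟨hi, ?_⟩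
    simp only [Set.mem_iUnion]
    exact ⟨i, hi, fun h => hik h⟩

/-- Symmetry of the double coefficient array of a nested Hahn series. -/
def IsSymDC (F : HahnSeries ℤ (HahnSeries ℤ R)) : Prop :=
  ∀ a b : ℤ, (F.coeff a).coeff b = (F.coeff b).coeff a

lemma IsSymDC.mul {x y : HahnSeries ℤ (HahnSeries ℤ R)} (hx : IsSymDC x) (hy : IsSymDC y) :
    IsSymDC (x * y) := by
  intro a b
  rw [dc_mul, dc_mul]
  rw [← finsum_comp_equiv (Equiv.prodComm ℤ ℤ)
    (f := fun p : ℤ × ℤ => (x.coeff p.1).coeff p.2 * ((y.coeff (b - p.1)).coeff (a - p.2)))]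
  apply finsum_congr
  rintro ⟨i, k⟩
  simp only [Equiv.prodComm_apply, Prod.swap]
  rw [hx k i, hy (b - k) (a - i)]

lemma IsSymDC.add {x y : HahnSeries ℤ (HahnSeries ℤ R)} (hx : IsSymDC x) (hy : IsSymDC y) :
    IsSymDC (x + y) := by
  intro a b
  simp only [HahnSeries.coeff_add]
  rw [hx, hy]

lemma single_one_mul_coeff {x : HahnSeries ℤ R} {r : R} {a : ℤ} :
    (HahnSeries.single (1 : ℤ) r * x).coeff a = r * x.coeff (a - 1) := by
  have := HahnSeries.coeff_single_mul_add (r := r) (x := x) (a := a - 1) (b := (1 : ℤ))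
  simpa using this

end Generic

/-! ### The one-variable identity `(z − qu)·Ω[u(X−(1−q)/z)] = (z − u)·Ω[uX]` -/

instance : CharZero Fq := charZero_of_injective_algebraMap (algebraMap ℚ Fq).injective

def zL : LSF := HahnSeries.single 1 1

def phiT (t : Fq) : SymF →+* LSF :=
  eval₂Hom ((HahnSeries.C : SymF →+* LSF).comp (MvPolynomial.C : Fq →+* SymF))
    (fun k => HahnSeries.C (X k : SymF) -
      HahnSeries.single (-(k + 1 : ℤ)) (C (1 - t ^ (k + 1)) : SymF))

lemma substHF_eq_phiT : substHF = phiT qp := rfl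

lemma hs_single_add (a : ℤ) (r s : SymF) :
    HahnSeries.single a (r + s) = HahnSeries.single a r + HahnSeries.single a s :=
  map_add (HahnSeries.single.addMonoidHom a) r s

lemma newtonF (n : ℕ) :
    (C ((n : Fq) + 1) : SymF) * hfunF (n + 1) =
      ∑ i ∈ Finset.range (n + 1), psumF (i + 1) * hfunF (n - i) := by
  rw [hfunF]
  rw [← mul_assoc, ← map_mul, mul_inv_cancel₀ (Nat.cast_add_one_ne_zero n), map_one, one_mul]

def piT (t : Fq) (i : ℕ) : LSF :=
  HahnSeries.C (X i : SymF) - HahnSeries.single (-(i + 1 : ℤ)) (C (1 - t ^ (i + 1)) : SymF)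

lemma phiT_psum (t : Fq) (i : ℕ) : phiT t (psumF (i + 1)) = piT t i := by
  simp only [psumF, Nat.add_sub_cancel, phiT, piT, eval₂Hom_X']

lemma phiT_C (t : Fq) (a : Fq) : phiT t (C a) = HahnSeries.C (C a) := by
  simp [phiT]

def hpT (t : Fq) (n : ℕ) : LSF := phiT t (hfunF n)

def hppT (t : Fq) : ℕ → LSF
  | 0 => 0
  | (n + 1) => hpT t n

def TqT (t : Fq) (n : ℕ) : LSF := zL * hpT t n - HahnSeries.C (C t) * hppT t n

lemma hpT_zero (t : Fq) : hpT t 0 = 1 := by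
  simp only [hpT, hfunF, map_one]

lemma TqT_zero (t : Fq) : TqT t 0 = zL := by
  simp [TqT, hpT_zero, hppT]

lemma newtonN (t : Fq) (n : ℕ) :
    HahnSeries.C (C ((n : Fq) + 1) : SymF) * hpT t (n + 1) =
      ∑ i ∈ Finset.range (n + 1), piT t i * hpT t (n - i) := by
  have := congrArg (phiT t) (newtonF n)
  rw [map_mul, phiT_C, map_sum] at this
  simp only [map_mul, phiT_psum] at this
  exact this

lemma newtonN' (t : Fq) (n : ℕ) :
    HahnSeries.C (C ((n : Fq) + 1) : SymF) * hpT t n =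
      (∑ i ∈ Finset.range (n + 1), piT t i * hppT t (n - i)) + hpT t n := by
  cases n with
  | zero =>
      simp [hppT, hpT_zero]
  | succ m =>
      have key : ∀ i ∈ Finset.range (m + 1), piT t i * hppT t (m + 1 - i)
          = piT t i * hpT t (m - i) := by
        intro i hi
        rw [Finset.mem_range] at hi
        have : m + 1 - i = (m - i) + 1 := by omega
        rw [this]
        rfl
      rw [Finset.sum_range_succ, Finset.sum_congr rfl key]
      have : hppT t (m + 1 - (m + 1)) = 0 := by
        simp [hppT]
      rw [this, mul_zero, add_zero]
      have cast1 : (C ((((m : ℕ) + 1 : ℕ) : Fq) + 1) : SymF)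
          = C (((m : Fq)) + 1) + 1 := by
        push_cast
        rw [map_add, map_one]
      rw [cast1, map_add, map_one, add_mul, one_mul, newtonN t m]

def sigT (t : Fq) (i : ℕ) : LSF := HahnSeries.single (-(i + 1 : ℤ)) (C (t ^ (i + 1)) : SymF)

lemma pi_decomp (t : Fq) (i : ℕ) :
    HahnSeries.C (psumF (i + 1)) - HahnSeries.single (-(i + 1 : ℤ)) (1 : SymF)
      = piT t i - sigT t i := by
  simp only [psumF, Nat.add_sub_cancel, piT, sigT]
  rw [sub_sub, ← hs_single_add]
  congr 1
  congr 1
  rw [← map_one (MvPolynomial.C : Fq →+* SymF), ← map_add]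
  congr 1
  ring

def BT (t : Fq) (n : ℕ) (i : ℕ) : LSF :=
  HahnSeries.single (-(i : ℤ)) (C (t ^ (i + 1)) : SymF) * hppT t (n + 1 - i)

lemma telescope (t : Fq) (n : ℕ) :
    ∑ i ∈ Finset.range (n + 1), sigT t i * TqT t (n - i)
      = HahnSeries.C (C t) * hpT t n := by
  have step : ∀ i ∈ Finset.range (n + 1),
      sigT t i * TqT t (n - i) = BT t n i - BT t n (i + 1) := by
    intro i hi
    rw [Finset.mem_range] at hi
    have h1 : n + 1 - i = (n - i) + 1 := by omega
    have hB1 : BT t n i = sigT t i * (zL * hpT t (n - i)) := by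
      rw [BT, h1]
      show HahnSeries.single (-(i:ℤ)) (C (t ^ (i + 1))) * hpT t (n - i) = _
      rw [sigT, zL, ← mul_assoc, HahnSeries.single_mul_single, mul_one]
      norm_num
    have hB2 : BT t n (i + 1) = sigT t i * (HahnSeries.C (C t) * hppT t (n - i)) := by
      rw [BT]
      have h2 : n + 1 - (i + 1) = n - i := by omega
      rw [h2, sigT, ← mul_assoc]
      congr 1
      have hexp : (-((i:ℤ)+1)) + 0 = -(((i+1:ℕ)):ℤ) := by push_cast; ring
      rw [show (HahnSeries.C (C t : SymF) : LSF) = HahnSeries.single (0:ℤ) (C t) from rfl,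
        HahnSeries.single_mul_single, hexp, ← map_mul, ← pow_succ]
    rw [hB1, hB2, ← mul_sub, TqT]
  rw [Finset.sum_congr rfl step, Finset.sum_range_sub' (BT t n)]
  have hB0 : BT t n 0 = HahnSeries.C (C t) * hpT t n := by
    show HahnSeries.single (-((0:ℕ):ℤ)) (C (t ^ (0 + 1))) * hppT t (n + 1 - 0) = _
    have h1 : (-((0:ℕ):ℤ)) = 0 := by norm_num
    have h2 : n + 1 - 0 = n + 1 := rfl
    rw [h1, h2, pow_one]
    rfl
  have hBn : BT t n (n + 1) = 0 := by
    rw [BT]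
    have : n + 1 - (n + 1) = 0 := by omega
    rw [this]
    show _ * hppT t 0 = 0
    rw [hppT, mul_zero]
  rw [hB0, hBn, sub_zero]

lemma Trec (t : Fq) (n : ℕ) :
    HahnSeries.C (C ((n : Fq) + 1) : SymF) * TqT t (n + 1) =
      ∑ i ∈ Finset.range (n + 1),
        (HahnSeries.C (psumF (i + 1)) - HahnSeries.single (-(i + 1 : ℤ)) (1 : SymF))
          * TqT t (n - i) := by
  have hT : ∀ i ∈ Finset.range (n + 1),
      (HahnSeries.C (psumF (i + 1)) - HahnSeries.single (-(i + 1 : ℤ)) (1 : SymF))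
          * TqT t (n - i)
        = (piT t i * (zL * hpT t (n - i)) - piT t i * (HahnSeries.C (C t) * hppT t (n - i)))
            - sigT t i * TqT t (n - i) := by
    intro i _
    rw [pi_decomp, TqT]
    ring
  rw [Finset.sum_congr rfl hT, Finset.sum_sub_distrib, Finset.sum_sub_distrib, telescope]
  have hunf : TqT t (n + 1) = zL * hpT t (n + 1) - HahnSeries.C (C t) * hpT t n := rfl
  have l1 : HahnSeries.C (C ((n : Fq) + 1) : SymF)
        * (zL * hpT t (n + 1) - HahnSeries.C (C t) * hpT t n)
      = zL * (HahnSeries.C (C ((n : Fq) + 1) : SymF) * hpT t (n + 1))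
        - HahnSeries.C (C t) * (HahnSeries.C (C ((n : Fq) + 1) : SymF) * hpT t n) := by
    ring
  rw [hunf, l1, newtonN t n, newtonN' t n]
  rw [Finset.mul_sum, mul_add, Finset.mul_sum]
  have c1 : ∀ i ∈ Finset.range (n + 1),
      zL * (piT t i * hpT t (n - i)) = piT t i * (zL * hpT t (n - i)) := fun i _ => by ring
  have c2 : ∀ i ∈ Finset.range (n + 1),
      HahnSeries.C (C t) * (piT t i * hppT t (n - i))
        = piT t i * (HahnSeries.C (C t) * hppT t (n - i)) := fun i _ => by ring
  rw [Finset.sum_congr rfl c1, Finset.sum_congr rfl c2]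
  abel

lemma TqT_eq (t s : Fq) : ∀ n, TqT t n = TqT s n := by
  intro n
  induction n using Nat.strong_induction_on with
  | _ n ih =>
    match n with
    | 0 => rw [TqT_zero, TqT_zero]
    | (m + 1) =>
      have hsum : ∑ i ∈ Finset.range (m + 1),
            (HahnSeries.C (psumF (i + 1)) - HahnSeries.single (-(i + 1 : ℤ)) (1 : SymF))
              * TqT t (m - i)
          = ∑ i ∈ Finset.range (m + 1),
            (HahnSeries.C (psumF (i + 1)) - HahnSeries.single (-(i + 1 : ℤ)) (1 : SymF))
              * TqT s (m - i) :=
        Finset.sum_congr rfl fun i _ => by rw [ih (m - i) (by omega)]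
      have key : HahnSeries.C (C ((m : Fq) + 1) : SymF) * TqT t (m + 1)
          = HahnSeries.C (C ((m : Fq) + 1) : SymF) * TqT s (m + 1) := by
        rw [Trec t m, Trec s m, hsum]
      have ha : ((m : Fq) + 1) ≠ 0 := Nat.cast_add_one_ne_zero m
      have cancel : ∀ x : LSF,
          HahnSeries.C (C (((m : Fq) + 1)⁻¹) : SymF)
            * (HahnSeries.C (C ((m : Fq) + 1) : SymF) * x) = x := by
        intro x
        rw [← mul_assoc, ← map_mul, ← map_mul, inv_mul_cancel₀ ha, map_one, map_one, one_mul]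
      rw [← cancel (TqT t (m + 1)), key, cancel]

lemma phiT_one_eq : phiT 1 = (HahnSeries.C : SymF →+* LSF) := by
  apply MvPolynomial.ringHom_ext
  · intro a
    exact phiT_C 1 a
  · intro k
    have : phiT 1 (X k) = HahnSeries.C (X k : SymF)
        - HahnSeries.single (-(k + 1 : ℤ)) (C (1 - (1:Fq) ^ (k + 1)) : SymF) := by
      simp only [phiT, eval₂Hom_X']
    rw [this, one_pow, sub_self, map_zero, map_zero, sub_zero]

def hprevF : ℕ → SymF
  | 0 => 0
  | (n + 1) => hfunF n

lemma keyHL (n : ℕ) :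
    zL * substHF (hfunF n) - HahnSeries.C (C qp) * substHF (hprevF n)
      = zL * HahnSeries.C (hfunF n) - HahnSeries.C (hprevF n) := by
  have h := TqT_eq qp 1 n
  have e1 : hppT qp n = phiT qp (hprevF n) := by
    cases n with
    | zero => simp [hppT, hprevF]
    | succ m => rfl
  have e2 : hppT 1 n = HahnSeries.C (hprevF n) := by
    cases n with
    | zero => simp [hppT, hprevF]
    | succ m => show hpT 1 m = _; rw [hpT, phiT_one_eq]; rfl
  rw [TqT, TqT, e1, e2, hpT, hpT, phiT_one_eq] at h
  rw [map_one, map_one, one_mul] at h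
  rw [substHF_eq_phiT]
  exact h

/-! ### The two-variable functional equation and the commutation relation -/

abbrev R2 : Type := HahnSeries ℤ LSF

abbrev mzH : LSF →+* R2 := hmap substHF
abbrev mzC : LSF →+* R2 := hmap (HahnSeries.C : SymF →+* LSF)
abbrev C2 : LSF →+* R2 := (HahnSeries.C : LSF →+* R2)

lemma OmegaF_coeff_nat (n : ℕ) : OmegaF.coeff (n : ℤ) = hfunF n := by
  rw [OmegaF, HahnSeries.ofPowerSeries_apply_coeff, PowerSeries.coeff_mk]

lemma OmegaF_coeff_neg (a : ℤ) (ha : a < 0) : OmegaF.coeff a = 0 := by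
  rw [OmegaF, HahnSeries.ofPowerSeries_apply, HahnSeries.embDomain_notin_range]
  rintro ⟨n, hn⟩
  change ((n : ℕ) : ℤ) = a at hn
  omega

lemma C2_single (r : LSF) : (C2 r : R2) = HahnSeries.single (0:ℤ) r := rfl
lemma CL_single (r : SymF) : (HahnSeries.C r : LSF) = HahnSeries.single (0:ℤ) r := rfl

/-- The core one-variable identity packaged in `R2`:
`(z − qu)·Ω[u(X−(1−q)/z)] = (z − u)·Ω[uX]`. -/
lemma core_identity :
    (C2 zL - HahnSeries.single (1 : ℤ) (HahnSeries.C (C qp))) * mzH OmegaF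
      = (C2 zL - HahnSeries.single (1 : ℤ) (1 : LSF)) * mzC OmegaF := by
  have expand : ∀ (u v : R2) (x : R2), (u - v) * x = u * x - v * x := fun u v x => by ring
  rw [expand, expand]
  apply HahnSeries.ext
  funext a
  rw [HahnSeries.coeff_sub, HahnSeries.coeff_sub, C2_single,
    HahnSeries.coeff_single_zero_mul, HahnSeries.coeff_single_zero_mul,
    single_one_mul_coeff, single_one_mul_coeff, one_mul]
  show zL * substHF (OmegaF.coeff a) - HahnSeries.C (C qp) * substHF (OmegaF.coeff (a - 1))
      = zL * HahnSeries.C (OmegaF.coeff a) - HahnSeries.C (OmegaF.coeff (a - 1))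
  by_cases ha : a < 0
  · rw [OmegaF_coeff_neg a ha, OmegaF_coeff_neg (a - 1) (by omega)]
    simp
  · obtain ⟨n, rfl⟩ : ∃ n : ℕ, a = (n : ℤ) := ⟨a.toNat, by omega⟩
    have e : OmegaF.coeff ((n : ℤ) - 1) = hprevF n := by
      cases n with
      | zero =>
          rw [show ((0:ℕ):ℤ) - 1 = -1 by norm_num, OmegaF_coeff_neg _ (by norm_num)]
          rfl
      | succ m =>
          rw [show ((m+1:ℕ):ℤ) - 1 = (m:ℤ) by push_cast; ring, OmegaF_coeff_nat m]
          rfl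
    rw [OmegaF_coeff_nat n, e]
    exact keyHL n

/-! ### Symmetry of the relevant double coefficient arrays -/

lemma symDC_CC (r : SymF) : IsSymDC (C2 (HahnSeries.C r)) := by
  intro a b
  by_cases ha : a = 0 <;> by_cases hb : b = 0 <;>
    simp [C2_single, CL_single, HahnSeries.coeff_single, ha, hb]

lemma IsSymDC.sub {x y : R2} (hx : IsSymDC x) (hy : IsSymDC y) : IsSymDC (x - y) := by
  intro a b
  simp only [HahnSeries.coeff_sub]
  rw [hx, hy]

lemma IsSymDC_pair (e : ℤ) (r : SymF) :
    IsSymDC (HahnSeries.single (0:ℤ) (HahnSeries.single e r)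
      + HahnSeries.single e (HahnSeries.single (0:ℤ) r)) := by
  intro a b
  simp only [HahnSeries.coeff_add, HahnSeries.coeff_single]
  by_cases h1 : a = 0 <;> by_cases h2 : b = 0 <;> by_cases h3 : a = e <;> by_cases h4 : b = e <;>
    simp_all [HahnSeries.coeff_single, HahnSeries.coeff_zero, HahnSeries.coeff_add]

lemma substHF_X (k : ℕ) :
    substHF (X k) = HahnSeries.C (X k : SymF) -
      HahnSeries.single (-(k + 1 : ℤ)) (C (1 - qp ^ (k + 1)) : SymF) := by
  simp only [substHF, eval₂Hom_X']

lemma substHF_C (a : Fq) : substHF (C a) = HahnSeries.C (C a) := by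
  simp [substHF]

lemma symDC_gen (k : ℕ) : IsSymDC (mzH (substHF (X k))) := by
  have e0 : mzH (substHF (X k))
      = mzH (HahnSeries.C (X k : SymF))
        - mzH (HahnSeries.single (-(k + 1 : ℤ)) (C (1 - qp ^ (k + 1)) : SymF)) := by
    rw [substHF_X, map_sub]
  have e1 : mzH (HahnSeries.C (X k : SymF)) = C2 (substHF (X k)) := hmap_C substHF (X k)
  have e2 : mzH (HahnSeries.single (-(k + 1 : ℤ)) (C (1 - qp ^ (k + 1)) : SymF))
      = HahnSeries.single (-(k + 1 : ℤ)) (HahnSeries.C (C (1 - qp ^ (k + 1)) : SymF)) := by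
    rw [hmap_single, substHF_C]
  have e3 : C2 (substHF (X k))
      = C2 (HahnSeries.C (X k : SymF))
        - C2 (HahnSeries.single (-(k + 1 : ℤ)) (C (1 - qp ^ (k + 1)) : SymF)) := by
    rw [substHF_X, map_sub]
  have decomp : mzH (substHF (X k))
      = C2 (HahnSeries.C (X k : SymF))
        - (HahnSeries.single (0:ℤ)
            (HahnSeries.single (-(k + 1 : ℤ)) (C (1 - qp ^ (k + 1)) : SymF))
          + HahnSeries.single (-(k + 1 : ℤ))
            (HahnSeries.single (0:ℤ) (C (1 - qp ^ (k + 1)) : SymF))) := by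
    rw [e0, e1, e2, e3, C2_single, C2_single, CL_single]
    abel
  rw [decomp]
  exact (symDC_CC (X k)).sub (IsSymDC_pair _ _)

lemma symA (P : SymF) : IsSymDC (mzH (substHF P)) := by
  induction P using MvPolynomial.induction_on with
  | C a =>
      have e : mzH (substHF (C a)) = C2 (HahnSeries.C (C a)) := by
        rw [substHF_C, hmap_C, substHF_C]
      rw [e]
      exact symDC_CC (C a)
  | add p q hp hq =>
      have e : mzH (substHF (p + q)) = mzH (substHF p) + mzH (substHF q) := by
        rw [map_add, map_add]
      rw [e]
      exact hp.add hq
  | mul_X p k hp =>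
      have e : mzH (substHF (p * X k)) = mzH (substHF p) * mzH (substHF (X k)) := by
        rw [map_mul, map_mul]
      rw [e]
      exact hp.mul (symDC_gen k)

lemma symOm : IsSymDC (mzC OmegaF * C2 OmegaF) := by
  have e : ∀ a b : ℤ, ((mzC OmegaF * C2 OmegaF).coeff a).coeff b
      = OmegaF.coeff a * OmegaF.coeff b := by
    intro a b
    rw [C2_single, HahnSeries.coeff_mul_single_zero,
      show (mzC OmegaF).coeff a = HahnSeries.single (0:ℤ) (OmegaF.coeff a) from rfl,
      HahnSeries.coeff_single_zero_mul]
  intro a b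
  rw [e, e, mul_comm]

/-! ### Putting everything together -/

lemma funceq (P : SymF) :
    (C2 zL - HahnSeries.single (1 : ℤ) (HahnSeries.C (C qp)))
        * (mzH (substHF P) * mzH OmegaF * C2 OmegaF)
      = (C2 zL - HahnSeries.single (1 : ℤ) (1 : LSF))
        * (mzH (substHF P) * mzC OmegaF * C2 OmegaF) := by
  have r1 : (C2 zL - HahnSeries.single (1 : ℤ) (HahnSeries.C (C qp)))
        * (mzH (substHF P) * mzH OmegaF * C2 OmegaF)
      = ((C2 zL - HahnSeries.single (1 : ℤ) (HahnSeries.C (C qp))) * mzH OmegaF)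
          * (mzH (substHF P) * C2 OmegaF) := by ring
  have r2 : ((C2 zL - HahnSeries.single (1 : ℤ) (1 : LSF)) * mzC OmegaF)
          * (mzH (substHF P) * C2 OmegaF)
      = (C2 zL - HahnSeries.single (1 : ℤ) (1 : LSF))
          * (mzH (substHF P) * mzC OmegaF * C2 OmegaF) := by ring
  rw [r1, core_identity, r2]

lemma extractq (x : R2) (m : ℤ) :
    (((C2 zL - HahnSeries.single (1 : ℤ) (HahnSeries.C (C qp))) * x).coeff m).coeff m
      = (x.coeff m).coeff (m - 1) - C qp * ((x.coeff (m - 1)).coeff m) := by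
  have expand : (C2 zL - HahnSeries.single (1 : ℤ) (HahnSeries.C (C qp))) * x
      = C2 zL * x - HahnSeries.single (1 : ℤ) (HahnSeries.C (C qp)) * x := by ring
  rw [expand, HahnSeries.coeff_sub, C2_single, HahnSeries.coeff_single_zero_mul,
    single_one_mul_coeff, HahnSeries.coeff_sub]
  have expand2 : (zL * x.coeff m : LSF) = HahnSeries.single (1:ℤ) (1:SymF) * x.coeff m := rfl
  rw [expand2, single_one_mul_coeff, one_mul, CL_single, HahnSeries.coeff_single_zero_mul]

lemma extract1 (x : R2) (m : ℤ) :
    (((C2 zL - HahnSeries.single (1 : ℤ) (1 : LSF)) * x).coeff m).coeff m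
      = (x.coeff m).coeff (m - 1) - ((x.coeff (m - 1)).coeff m) := by
  have expand : (C2 zL - HahnSeries.single (1 : ℤ) (1 : LSF)) * x
      = C2 zL * x - HahnSeries.single (1 : ℤ) (1 : LSF) * x := by ring
  rw [expand, HahnSeries.coeff_sub, C2_single, HahnSeries.coeff_single_zero_mul,
    single_one_mul_coeff, one_mul, HahnSeries.coeff_sub]
  have expand2 : (zL * x.coeff m : LSF) = HahnSeries.single (1:ℤ) (1:SymF) * x.coeff m := rfl
  rw [expand2, single_one_mul_coeff, one_mul]

lemma Hop_comp (m k : ℤ) (P : SymF) :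
    Hop k (Hop m P)
      = (((mzH (substHF P) * mzH OmegaF * C2 OmegaF).coeff m).coeff k) := by
  have e0 : mzH (substHF P * OmegaF) = mzH (substHF P) * mzH OmegaF := by rw [map_mul]
  calc Hop k (Hop m P)
      = ((mzH (substHF P * OmegaF) * C2 OmegaF).coeff m).coeff k := by
        rw [Hop, Hop]
        congr 2
        rw [C2_single, HahnSeries.coeff_mul_single_zero]
        rfl
    _ = _ := by
        rw [e0]

/-- The Jing operators for the Hall-Littlewood symmetric functions satisfy
`H_{m−1} H_m = q · H_m H_{m−1}`. -/
theorem jing_commutation (m : ℤ) (P : SymF) :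
    Hop (m - 1) (Hop m P) = C qp * Hop m (Hop (m - 1) P) := by
  set F := mzH (substHF P) * mzH OmegaF * C2 OmegaF with hF
  set G := mzH (substHF P) * mzC OmegaF * C2 OmegaF with hG
  have hsymG : IsSymDC G := by
    have e : G = mzH (substHF P) * (mzC OmegaF * C2 OmegaF) := by rw [hG]; ring
    rw [e]
    exact (symA P).mul symOm
  have h1 : (F.coeff m).coeff (m - 1) - C qp * ((F.coeff (m - 1)).coeff m)
      = (G.coeff m).coeff (m - 1) - ((G.coeff (m - 1)).coeff m) := by
    rw [← extractq F m, ← extract1 G m, hF, hG, funceq P]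
  have h2 : (G.coeff m).coeff (m - 1) - ((G.coeff (m - 1)).coeff m) = 0 := by
    rw [hsymG m (m - 1), sub_self]
  rw [Hop_comp m (m - 1) P, Hop_comp (m - 1) m P]
  exact sub_eq_zero.mp (h1.trans h2)

end
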